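/- Let P be an additive category and consider a linear system in the Freyd category A(P): morphisms [α_ij] : (A_i ← R_{A_i}) → (B_j ← R_{B_j}), [β_ij] : (C_j ← R_{C_j}) → (D_i ← R_{D_i}), and [γ_i] : (A_i ← R_{A_i}) → (D_i ← R_{D_i}) of A(P), for 1 ≤ i ≤ m and 1 ≤ j ≤ n, with structure morphisms ρ_{A_i}, ρ_{B_j}, ρ_{C_j}, ρ_{D_i}. Then there exists a family of morphisms X_j : (B_j ← R_{B_j}) → (C_j ← R_{C_j}) in A(P) with Σ_{j=1}^n [β_ij] ∘ X_j ∘ [α_ij] = [γ_i] for all i, if and only if there exist morphisms X_j^1 : B_j → C_j, X_j^2 : R_{B_j} → R_{C_j}, and Z_i : A_i → R_{D_i} in P satisfying ρ_{C_j} ∘ X_j^2 = X_j^1 ∘ ρ_{B_j} for all j and Σ_{j=1}^n β_ij ∘ X_j^1 ∘ α_ij = γ_i + ρ_{D_i} ∘ Z_i for all i (where α_ij, β_ij, γ_i denote chosen representatives). -/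

import Mathlib

/-! The projection `Freyd.Q` is full and additive, and two representatives become equal in
`A(P)` exactly when their difference factors through the relations `ρ` of the target. Hence a
solution in `A(P)` lifts to representatives `X₁ j` with witnesses `X₂ j`, and each equation `i`
holds in `A(P)` precisely when it holds in `P` up to a term `Z i ≫ ρ`. -/

open CategoryTheory Limits Opposite

set_option linter.unusedSectionVars false

universe v u

/-- An object of the Freyd category of `P`: a morphism `ρ : R ⟶ A` of `P`,
thought of as "the object `A` with relations `R`". -/
structure FreydObj (P : Type u) [CategoryTheory.Category.{v} P] : Type max u v where
  R : P
  A : P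
  ρ : R ⟶ A

namespace FreydObj

variable {P : Type u} [Category.{v} P] [Preadditive P]

/-- The "pre-Freyd" category: morphisms are morphism data admitting a witness;
the Freyd category is its quotient by the relation of having a homotopy `λ`. -/
instance : Category.{v} (FreydObj P) where
  Hom X Y := {α : X.A ⟶ Y.A // ∃ w : X.R ⟶ Y.R, X.ρ ≫ α = w ≫ Y.ρ}
  id X := ⟨𝟙 X.A, ⟨𝟙 X.R, by simp⟩⟩
  comp {X Y Z} f g := ⟨f.1 ≫ g.1, by
    obtain ⟨w, hw⟩ := f.2
    obtain ⟨v, hv⟩ := g.2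
    refine ⟨w ≫ v, ?_⟩
    rw [← Category.assoc, hw, Category.assoc, hv, Category.assoc]⟩
  id_comp f := Subtype.ext (Category.id_comp _)
  comp_id f := Subtype.ext (Category.comp_id _)
  assoc f g h := Subtype.ext (Category.assoc _ _ _)

@[simp] lemma comp_val {X Y Z : FreydObj P} (f : X ⟶ Y) (g : Y ⟶ Z) :
    (f ≫ g).1 = f.1 ≫ g.1 := rfl

@[simp] lemma id_val (X : FreydObj P) : (𝟙 X : X ⟶ X).1 = 𝟙 X.A := rfl

instance homAdd (X Y : FreydObj P) : Add (X ⟶ Y) :=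
  ⟨fun f g => ⟨f.1 + g.1, by
    obtain ⟨w, hw⟩ := f.2
    obtain ⟨v, hv⟩ := g.2
    exact ⟨w + v, by rw [Preadditive.comp_add, Preadditive.add_comp, hw, hv]⟩⟩⟩

instance homZero (X Y : FreydObj P) : Zero (X ⟶ Y) := ⟨⟨0, ⟨0, by simp⟩⟩⟩

instance homNeg (X Y : FreydObj P) : Neg (X ⟶ Y) :=
  ⟨fun f => ⟨-f.1, by
    obtain ⟨w, hw⟩ := f.2
    exact ⟨-w, by rw [Preadditive.comp_neg, Preadditive.neg_comp, hw]⟩⟩⟩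

@[simp] lemma add_val {X Y : FreydObj P} (f g : X ⟶ Y) : (f + g).1 = f.1 + g.1 := rfl
@[simp] lemma zero_val (X Y : FreydObj P) : (0 : X ⟶ Y).1 = 0 := rfl
@[simp] lemma neg_val {X Y : FreydObj P} (f : X ⟶ Y) : (-f).1 = -f.1 := rfl

instance homAddCommGroup (X Y : FreydObj P) : AddCommGroup (X ⟶ Y) where
  add_assoc f g h := Subtype.ext (add_assoc f.1 g.1 h.1)
  zero_add f := Subtype.ext (zero_add f.1)
  add_zero f := Subtype.ext (add_zero f.1)
  add_comm f g := Subtype.ext (add_comm f.1 g.1)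
  neg_add_cancel f := Subtype.ext (neg_add_cancel f.1)
  nsmul := nsmulRec
  zsmul := zsmulRec

instance : Preadditive (FreydObj P) where
  add_comp _ _ _ f f' g := Subtype.ext (by simp [Preadditive.add_comp])
  comp_add _ _ _ f g g' := Subtype.ext (by simp [Preadditive.comp_add])

end FreydObj

/-- Two morphism data are identified in the Freyd category iff their difference
factors through the relations of the target. -/
def freydRel (P : Type u) [Category.{v} P] [Preadditive P] : HomRel (FreydObj P) :=
  fun {X Y} f g => ∃ l : X.A ⟶ Y.R, l ≫ Y.ρ = f.1 - g.1

instance freydRel_congruence (P : Type u) [Category.{v} P] [Preadditive P] :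
    Congruence (freydRel P) where
  equivalence :=
    { refl := fun f => ⟨0, by simp⟩
      symm := fun {f g} h => by
        obtain ⟨l, hl⟩ := h
        exact ⟨-l, by rw [Preadditive.neg_comp, hl]; abel⟩
      trans := fun {f g h} h₁ h₂ => by
        obtain ⟨l₁, hl₁⟩ := h₁
        obtain ⟨l₂, hl₂⟩ := h₂
        exact ⟨l₁ + l₂, by rw [Preadditive.add_comp, hl₁, hl₂]; abel⟩ }
  comp_left := by
    intro _ _ _ f g g' h
    obtain ⟨l, hl⟩ := h
    exact ⟨f.1 ≫ l, by rw [Category.assoc, hl, Preadditive.comp_sub]; rfl⟩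
  comp_right := by
    intro _ _ _ f f' g h
    obtain ⟨l, hl⟩ := h
    obtain ⟨w, hw⟩ := g.2
    exact ⟨l ≫ w, by
      rw [Category.assoc, ← hw, ← Category.assoc, hl, Preadditive.sub_comp]; rfl⟩

/-- The Freyd category of an additive category `P`. -/
abbrev Freyd (P : Type u) [Category.{v} P] [Preadditive P] :=
  CategoryTheory.Quotient (freydRel P)

noncomputable instance (P : Type u) [Category.{v} P] [Preadditive P] :
    Preadditive (Freyd P) :=
  CategoryTheory.Quotient.preadditive (freydRel P) (by
    rintro X Y f₁ f₂ g₁ g₂ ⟨l₁, hl₁⟩ ⟨l₂, hl₂⟩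
    exact ⟨l₁ + l₂, by
      rw [Preadditive.add_comp, hl₁, hl₂]
      show _ = (f₁ + g₁).1 - (f₂ + g₂).1
      simp only [FreydObj.add_val]
      abel⟩)

/-- The projection functor from the pre-Freyd category to the Freyd category. -/
abbrev Freyd.Q (P : Type u) [Category.{v} P] [Preadditive P] :
    FreydObj P ⥤ Freyd P :=
  CategoryTheory.Quotient.functor (freydRel P)

/-- `P` has weak kernels. -/
def HasWeakKernels (P : Type u) [Category.{v} P] [Preadditive P] : Prop :=
  ∀ ⦃A B : P⦄ (f : A ⟶ B), ∃ (K : P) (κ : K ⟶ A), κ ≫ f = 0 ∧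
    ∀ ⦃T : P⦄ (τ : T ⟶ A), τ ≫ f = 0 → ∃ u : T ⟶ K, u ≫ κ = τ

namespace FreydObj

variable {P : Type u} [Category.{v} P] [Preadditive P]

lemma sum_val {ι : Type*} (s : Finset ι) {X Y : FreydObj P} (f : ι → (X ⟶ Y)) :
    (∑ i ∈ s, f i).1 = ∑ i ∈ s, (f i).1 :=
  map_sum (AddMonoidHom.mk' (fun g : X ⟶ Y => g.1) fun _ _ => rfl) f s

end FreydObj

namespace Freyd

variable {P : Type u} [Category.{v} P] [Preadditive P]

instance Q_additive : (Q P).Additive := ⟨rfl⟩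

lemma Q_map_eq_iff {X Y : FreydObj P} (f g : X ⟶ Y) :
    (Q P).map f = (Q P).map g ↔ ∃ Z : X.A ⟶ Y.R, f.1 = g.1 + Z ≫ Y.ρ := by
  rw [Quotient.functor_map_eq_iff]
  exact exists_congr fun Z => by rw [eq_sub_iff_add_eq, add_comm, eq_comm]

lemma sum_Q_map_comp_eq_iff {ι : Type*} (s : Finset ι) {A D : FreydObj P}
    {B C : ι → FreydObj P} (α : ∀ j, A ⟶ B j) (x : ∀ j, B j ⟶ C j) (β : ∀ j, C j ⟶ D)
    (γ : A ⟶ D) :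
    (∑ j ∈ s, (Q P).map (α j) ≫ (Q P).map (x j) ≫ (Q P).map (β j)) = (Q P).map γ ↔
      ∃ Z : A.A ⟶ D.R, ∑ j ∈ s, (α j).1 ≫ (x j).1 ≫ (β j).1 = γ.1 + Z ≫ D.ρ := by
  simp only [← Functor.map_comp, ← Functor.map_sum, Q_map_eq_iff, FreydObj.sum_val,
    FreydObj.comp_val]

end Freyd

/-- a linear system in the Freyd category `A(P)` (given by representatives
`α i j`, `β i j`, `γ i` in the pre-Freyd category) has a solution if and only if the
associated linear system in `P` (with extra unknowns `X₂` for the witnesses of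
well-definedness and `Z` for the witnesses of the equations) has a solution. -/
theorem freyd_linear_system (P : Type u) [Category.{v} P] [Preadditive P] (m n : ℕ)
    (A D : Fin m → FreydObj P) (B C : Fin n → FreydObj P)
    (α : ∀ i j, A i ⟶ B j) (β : ∀ i j, C j ⟶ D i) (γ : ∀ i, A i ⟶ D i) :
    (∃ X : ∀ j, (Freyd.Q P).obj (B j) ⟶ (Freyd.Q P).obj (C j),
      ∀ i, (∑ j, (Freyd.Q P).map (α i j) ≫ X j ≫ (Freyd.Q P).map (β i j)) =
        (Freyd.Q P).map (γ i)) ↔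
    (∃ (X₁ : ∀ j, (B j).A ⟶ (C j).A) (X₂ : ∀ j, (B j).R ⟶ (C j).R)
        (Z : ∀ i, (A i).A ⟶ (D i).R),
      (∀ j, (B j).ρ ≫ X₁ j = X₂ j ≫ (C j).ρ) ∧
      (∀ i, (∑ j, (α i j).1 ≫ X₁ j ≫ (β i j).1) = (γ i).1 + Z i ≫ (D i).ρ)) := by
  constructor
  · rintro ⟨X, hX⟩
    choose x hx using fun j => (Freyd.Q P).map_surjective (X j)
    obtain rfl : X = fun j => (Freyd.Q P).map (x j) := funext fun j => (hx j).symm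
    choose X₂ hX₂ using fun j => (x j).2
    choose Z hZ using fun i => (Freyd.sum_Q_map_comp_eq_iff _ _ x _ _).1 (hX i)
    exact ⟨fun j => (x j).1, X₂, Z, hX₂, hZ⟩
  · rintro ⟨X₁, X₂, Z, hX, hZ⟩
    exact ⟨fun j => (Freyd.Q P).map ⟨X₁ j, X₂ j, hX j⟩,
      fun i => (Freyd.sum_Q_map_comp_eq_iff _ _ _ _ _).2 ⟨Z i, hZ i⟩⟩
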